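/- arXiv:2302.11887 — 2 statements merged into one kernel-verified Lean document; each statement's English description precedes it below -/
import Mathlib

section
/- For every function f in RPP^k, the composition f ; f^{-1} equals the identity on ℤ^k, and likewise f^{-1} ; f equals the identity. -/
namespace RPPx

/-- Recursive Primitive Permutations, inductively generated by arity. -/
inductive RPP : ℕ → Type
  | id : RPP 1
  | suc : RPP 1
  | pre : RPP 1
  | sign : RPP 1
  | swap : RPP 2
  | comp {k : ℕ} (f g : RPP k) : RPP k
  | par {k l : ℕ} (f : RPP k) (g : RPP l) : RPP (k + l)
  | it {k : ℕ} (f : RPP k) : RPP (k + 1)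
  | ite {k : ℕ} (f g h : RPP k) : RPP (k + 1)

/-- The semantics of an RPP function, as a map `ℤ^k → ℤ^k`. -/
def eval : ∀ {k : ℕ}, RPP k → (Fin k → ℤ) → (Fin k → ℤ)
  | _, .id => fun v => v
  | _, .suc => fun v i => v i + 1
  | _, .pre => fun v i => v i - 1
  | _, .sign => fun v i => -(v i)
  | _, .swap => fun v i => v i.rev
  | _, .comp f g => fun v => eval g (eval f v)
  | _, @RPP.par k l f g =>
      fun v => Fin.append (eval f (v ∘ Fin.castAdd l)) (eval g (v ∘ Fin.natAdd k))
  | _, @RPP.it k f =>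
      fun v => Fin.snoc ((eval f)^[(v (Fin.last k)).natAbs] (Fin.init v)) (v (Fin.last k))
  | _, @RPP.ite k f g h =>
      fun v => Fin.snoc
        ((if 0 < v (Fin.last k) then eval f
          else if v (Fin.last k) = 0 then eval g else eval h) (Fin.init v))
        (v (Fin.last k))

/-- The structurally defined inverse of an RPP function. -/
def inv : ∀ {k : ℕ}, RPP k → RPP k
  | _, .id => .id
  | _, .suc => .pre
  | _, .pre => .suc
  | _, .sign => .sign
  | _, .swap => .swap
  | _, .comp f g => .comp (inv g) (inv f)
  | _, .par f g => .par (inv f) (inv g)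
  | _, .it f => .it (inv f)
  | _, .ite f g h => .ite (inv f) (inv g) (inv h)

end RPPx

/-- For every `f ∈ RPP^k`, the sequential composition `f ; f⁻¹`
is the identity on `ℤ^k`, and likewise `f⁻¹ ; f` is the identity. -/
theorem rpp_inv_comp_eq_id {k : ℕ} (f : RPPx.RPP k) :
    (RPPx.eval (RPPx.inv f)) ∘ (RPPx.eval f) = id ∧
    (RPPx.eval f) ∘ (RPPx.eval (RPPx.inv f)) = id := by
  induction f with
  | id => exact ⟨rfl, rfl⟩
  | suc => constructor <;> funext v i <;> simp [RPPx.eval, RPPx.inv]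
  | pre => constructor <;> funext v i <;> simp [RPPx.eval, RPPx.inv]
  | sign => constructor <;> funext v i <;> simp [RPPx.eval, RPPx.inv]
  | swap => constructor <;> funext v i <;> simp [RPPx.eval, RPPx.inv]
  | comp f g hf hg =>
    obtain ⟨hf1, hf2⟩ := hf; obtain ⟨hg1, hg2⟩ := hg
    constructor
    · show RPPx.eval (RPPx.inv f) ∘ (RPPx.eval (RPPx.inv g) ∘ RPPx.eval g) ∘ RPPx.eval f = id
      rw [hg1]; simpa using hf1
    · show RPPx.eval g ∘ (RPPx.eval f ∘ RPPx.eval (RPPx.inv f)) ∘ RPPx.eval (RPPx.inv g) = id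
      rw [hf2]; simpa using hg2
  | par f g hf hg =>
    obtain ⟨hf1, hf2⟩ := hf; obtain ⟨hg1, hg2⟩ := hg
    have hf1' := fun x => congrFun hf1 x
    have hf2' := fun x => congrFun hf2 x
    have hg1' := fun x => congrFun hg1 x
    have hg2' := fun x => congrFun hg2 x
    simp only [Function.comp_apply, id_eq] at hf1' hf2' hg1' hg2'
    have e1 : ∀ (m n : ℕ) (A : Fin m → ℤ) (B : Fin n → ℤ),
        Fin.append A B ∘ Fin.castAdd n = A := fun m n A B => funext fun i => Fin.append_left A B i
    have e2 : ∀ (m n : ℕ) (A : Fin m → ℤ) (B : Fin n → ℤ),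
        Fin.append A B ∘ Fin.natAdd m = B := fun m n A B => funext fun i => Fin.append_right A B i
    constructor <;> funext v <;>
      simp [RPPx.eval, RPPx.inv, e1, e2, hf1', hf2', hg1', hg2'] <;> exact Fin.append_castAdd_natAdd
  | it f hf =>
    obtain ⟨hf1, hf2⟩ := hf
    have hL : Function.LeftInverse (RPPx.eval (RPPx.inv f)) (RPPx.eval f) := congrFun hf1
    have hR : Function.LeftInverse (RPPx.eval f) (RPPx.eval (RPPx.inv f)) := congrFun hf2
    constructor <;> funext v <;>
      simp [RPPx.eval, RPPx.inv, Fin.init_snoc, Fin.snoc_last, hL.iterate _ _, hR.iterate _ _,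
        Fin.snoc_init_self]
  | ite f g h hf hg hh =>
    obtain ⟨hf1, hf2⟩ := hf; obtain ⟨hg1, hg2⟩ := hg; obtain ⟨hh1, hh2⟩ := hh
    have hf1' := fun x => congrFun hf1 x; have hf2' := fun x => congrFun hf2 x
    have hg1' := fun x => congrFun hg1 x; have hg2' := fun x => congrFun hg2 x
    have hh1' := fun x => congrFun hh1 x; have hh2' := fun x => congrFun hh2 x
    simp only [Function.comp_apply, id_eq] at hf1' hf2' hg1' hg2' hh1' hh2'
    constructor <;> funext v <;>
      · simp only [RPPx.eval, RPPx.inv, Function.comp_apply, id_eq, Fin.init_snoc, Fin.snoc_last]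
        split_ifs <;> simp [hf1', hf2', hg1', hg2', hh1', hh2', Fin.snoc_init_self]
end

section
/- Every function in RPP is a bijection of ℤ^k onto itself. -/
namespace RPPx

lemma inv_inv : ∀ {k : ℕ} (f : RPP k), inv (inv f) = f := by
  intro k f
  induction f <;> simp [inv, *]

lemma inv_left : ∀ {k : ℕ} (f : RPP k) (v : Fin k → ℤ),
    eval (inv f) (eval f v) = v := by
  intro k f
  induction f with
  | id => intro v; rfl
  | suc => intro v; funext i; simp [eval, inv]
  | pre => intro v; funext i; simp [eval, inv]
  | sign => intro v; funext i; simp [eval, inv]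
  | swap => intro v; funext i; simp [eval, inv]
  | comp f g ihf ihg => intro v; simp [eval, inv, ihf, ihg]
  | par f g ihf ihg =>
      intro v
      simp only [eval, inv]
      have h1 : (Fin.append (eval f (v ∘ Fin.castAdd _)) (eval g (v ∘ Fin.natAdd _)))
          ∘ Fin.castAdd _ = eval f (v ∘ Fin.castAdd _) := by
        funext i; simp [Fin.append_left]
      have h2 : (Fin.append (eval f (v ∘ Fin.castAdd _)) (eval g (v ∘ Fin.natAdd _)))
          ∘ Fin.natAdd _ = eval g (v ∘ Fin.natAdd _) := by
        funext i; simp [Fin.append_right]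
      rw [h1, h2, ihf, ihg]
      funext i
      exact Fin.addCases (fun j => by simp [Fin.append_left])
        (fun j => by simp [Fin.append_right]) i
  | it f ihf =>
      intro v
      simp only [eval, inv, Fin.snoc_last, Fin.init_snoc]
      rw [Function.LeftInverse.iterate ihf, Fin.snoc_init_self]
  | ite f g h ihf ihg ihh =>
      intro v
      simp only [eval, inv, Fin.snoc_last, Fin.init_snoc]
      split_ifs with h1 h2 <;> simp [ihf, ihg, ihh, Fin.snoc_init_self]

lemma inv_right {k : ℕ} (f : RPP k) (v : Fin k → ℤ) :
    eval f (eval (inv f) v) = v := by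
  have h := inv_left (inv f) v
  rwa [inv_inv] at h

end RPPx

/-- Every function in RPP is a bijection of `ℤ^k` onto itself. -/
theorem rpp_bijective {k : ℕ} (f : RPPx.RPP k) :
    Function.Bijective (RPPx.eval f) :=
  Function.bijective_iff_has_inverse.mpr
    ⟨RPPx.eval (RPPx.inv f), RPPx.inv_left f, RPPx.inv_right f⟩
end
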